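/- arXiv:2304.10940 — 9 statements merged into one kernel-verified Lean document; each statement's English description precedes it below -/
import Mathlib

section
/- If a PB rule F is the MLE of some noise model M for an instance I — that is, for every profile A over I, F(I,A) equals the set of feasible budget allocations π maximizing the likelihood L_M(A,π) — then F satisfies weak reinforcement on I. Consequently, a PB rule that fails weak reinforcement is not the MLE of any noise model. -/
/-!
With `L_A` the likelihood of profile `A`, `F A` is the set of feasible maximizers of `L_A`, and
`L_{A ++ A'} = L_A * L_A'`. When `L_A` and `L_A'` have the same maximizers, each of them maximizes
the product. Conversely, fix a maximizer `π₀` of `L_A`; if `π` maximizes the product, then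
`L_A π₀ * L_A' π₀ ≤ L_A π * L_A' π ≤ L_A π * L_A' π₀`, so `π` maximizes `L_A` when
`L_A' π₀ > 0`.
If `L_A' π₀ = 0`, then `L_A'` vanishes on every feasible allocation, so every feasible allocation
maximizes `L_A'`, hence `L_A`.
-/

section ArgmaxMul

variable {α : Type*} {s : Set α} {f g : α → ℝ}

theorem IsMaxOn.mul_of_nonneg (hf : ∀ x ∈ s, 0 ≤ f x) (hg : ∀ x ∈ s, 0 ≤ g x) {a : α}
    (ha : a ∈ s) (hfa : IsMaxOn f s a) (hga : IsMaxOn g s a) : IsMaxOn (f * g) s a :=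
  isMaxOn_iff.2 fun x hx =>
    mul_le_mul (isMaxOn_iff.1 hfa x hx) (isMaxOn_iff.1 hga x hx) (hg x hx) (hf a ha)

theorem isMaxOn_of_isMaxOn_mul (hf : ∀ x ∈ s, 0 ≤ f x) (hg : ∀ x ∈ s, 0 ≤ g x)
    (hfg : ∀ x ∈ s, IsMaxOn f s x ↔ IsMaxOn g s x) {a₀ : α} (ha₀ : a₀ ∈ s)
    (hfa₀ : IsMaxOn f s a₀) {a : α} (ha : a ∈ s) (hfga : IsMaxOn (f * g) s a) :
    IsMaxOn f s a := by
  have hga₀ : IsMaxOn g s a₀ := (hfg a₀ ha₀).1 hfa₀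
  rcases (hg a₀ ha₀).eq_or_lt with hzero | hpos
  · refine (hfg a ha).2 (isMaxOn_iff.2 fun x hx => ?_)
    calc g x ≤ g a₀ := isMaxOn_iff.1 hga₀ x hx
      _ = 0 := hzero.symm
      _ ≤ g a := hg a ha
  · have hle : f a₀ * g a₀ ≤ f a * g a₀ :=
      calc f a₀ * g a₀ ≤ f a * g a := isMaxOn_iff.1 hfga a₀ ha₀
        _ ≤ f a * g a₀ := mul_le_mul_of_nonneg_left (isMaxOn_iff.1 hga₀ a ha) (hf a ha)
    exact isMaxOn_iff.2 fun x hx =>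
      (isMaxOn_iff.1 hfa₀ x hx).trans (le_of_mul_le_mul_right hle hpos)

theorem setOf_isMaxOn_mul_eq (hf : ∀ x ∈ s, 0 ≤ f x) (hg : ∀ x ∈ s, 0 ≤ g x)
    (hne : ∃ a ∈ s, IsMaxOn f s a)
    (hfg : {x ∈ s | IsMaxOn f s x} = {x ∈ s | IsMaxOn g s x}) :
    {x ∈ s | IsMaxOn (f * g) s x} = {x ∈ s | IsMaxOn f s x} := by
  have hfg' : ∀ x ∈ s, IsMaxOn f s x ↔ IsMaxOn g s x := fun x hx => by
    simpa [hx] using Set.ext_iff.1 hfg x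
  obtain ⟨a₀, ha₀, hfa₀⟩ := hne
  ext a
  refine and_congr_right fun ha =>
    ⟨isMaxOn_of_isMaxOn_mul hf hg hfg' ha₀ hfa₀ ha, fun hfa => ?_⟩
  exact hfa.mul_of_nonneg hf hg ha ((hfg' a ha).1 hfa)

end ArgmaxMul

theorem mle_implies_weak_reinforcement_general
    {P : Type*} [Fintype P]
    (c : P → ℕ) (b : ℕ)
    (F : List (Finset P) → Set (Finset P))
    (M : Finset P → Finset P → ℝ)
    (hM_nonneg : ∀ π : Finset P, ∑ p ∈ π, c p ≤ b → ∀ A : Finset P, 0 ≤ M A π)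
    (hMLE : ∀ A : List (Finset P),
      F A = {π : Finset P | ∑ p ∈ π, c p ≤ b ∧
        ∀ π' : Finset P, ∑ p ∈ π', c p ≤ b →
          (A.map (fun Ai => M Ai π')).prod ≤ (A.map (fun Ai => M Ai π)).prod}) :
    ∀ A A' : List (Finset P), F A = F A' → F (A ++ A') = F A := by
  set S : Set (Finset P) := {π | ∑ p ∈ π, c p ≤ b}
  set L : List (Finset P) → Finset P → ℝ := fun B π => (B.map (M · π)).prod
  have hF : ∀ B, F B = {π ∈ S | IsMaxOn (L B) S π} := fun B => by
    simp only [hMLE B, isMaxOn_iff]; rfl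
  have hL_nonneg : ∀ B, ∀ π ∈ S, 0 ≤ L B π := fun B π hπ =>
    List.prod_nonneg <| by simpa using fun A _ => hM_nonneg π hπ A
  have hL_append : ∀ B B', L (B ++ B') = L B * L B' := fun B B' => by
    funext π; simp [L]
  intro A A' hAA'
  have hmax : ∃ π ∈ S, IsMaxOn (L A) S π := by
    obtain ⟨π, hπ, h⟩ := Set.exists_max_image S (L A) S.toFinite ⟨∅, by simp [S]⟩
    exact ⟨π, hπ, isMaxOn_iff.2 h⟩
  rw [hF, hF, hL_append]
  exact setOf_isMaxOn_mul_eq (hL_nonneg A) (hL_nonneg A') hmax (by rw [← hF, ← hF, hAA'])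

/-- If a PB rule `F` is the MLE of some noise model `M` for an instance
`I = ⟨P, c, b⟩` — i.e. for every profile `A`, `F A` is the set of feasible
budget allocations maximizing the likelihood — then `F` satisfies weak
reinforcement. -/
theorem mle_implies_weak_reinforcement
    {P : Type*} [Fintype P] [DecidableEq P]
    (c : P → ℕ) (b : ℕ)
    (F : List (Finset P) → Set (Finset P))
    (M : Finset P → Finset P → ℝ)
    (hM_nonneg : ∀ π : Finset P, ∑ p ∈ π, c p ≤ b → ∀ A : Finset P, 0 ≤ M A π)
    (hM_sum : ∀ π : Finset P, ∑ p ∈ π, c p ≤ b → ∑ A : Finset P, M A π = 1)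
    (hMLE : ∀ A : List (Finset P),
      F A = {π : Finset P | ∑ p ∈ π, c p ≤ b ∧
        ∀ π' : Finset P, ∑ p ∈ π', c p ≤ b →
          (A.map (fun Ai => M Ai π')).prod ≤ (A.map (fun Ai => M Ai π)).prod}) :
    ∀ A A' : List (Finset P), F A = F A' → F (A ++ A') = F A :=
  mle_implies_weak_reinforcement_general c b F M hM_nonneg hMLE
end

section
/- Every monotonic argmax PB rule satisfies weak reinforcement: if F is defined by F(I,A) = argmax_{π feasible} f(I,A,π) for a score function f satisfying the two monotonicity conditions, then for all profiles A, A' with F(I,A) = F(I,A') one has F(I, A ++ A') = F(I,A). -/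
/-!
Fix a maximizer `π` of `f A` over the feasible allocations. Since `A` and `A'` have the
same maximizers, a feasible `π'` ties with `π` under `f A` exactly when it ties under `f A'`;
otherwise it is strictly worse under both. Monotonicity transfers either verdict to
`f (A ++ A')`, so `π` still maximizes it and the ties with `π` are the same as before.
-/

section Maximizers

variable {α β : Type*} [LinearOrder β]

def maximizers (S : Set α) (g : α → β) : Set α := {x | x ∈ S ∧ IsMaxOn g S x}

variable {S : Set α} {g h k : α → β} {x y : α}

theorem mem_maximizers_iff : x ∈ maximizers S g ↔ x ∈ S ∧ ∀ y ∈ S, g y ≤ g x := by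
  rw [maximizers, Set.mem_ofPred_eq, isMaxOn_iff]

theorem maximizers_nonempty (hfin : S.Finite) (hne : S.Nonempty) : (maximizers S g).Nonempty := by
  obtain ⟨x, hx, hmax⟩ := Set.exists_max_image S g hfin hne
  exact ⟨x, mem_maximizers_iff.2 ⟨hx, hmax⟩⟩

theorem mem_maximizers_iff_eq (hx : x ∈ maximizers S g) (hy : y ∈ S) :
    y ∈ maximizers S g ↔ g y = g x := by
  rw [mem_maximizers_iff] at hx ⊢
  refine ⟨fun hymax => le_antisymm (hx.2 y hy) (hymax.2 x hx.1), fun hxy => ⟨hy, ?_⟩⟩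
  exact fun z hz => hxy ▸ hx.2 z hz

theorem lt_and_lt_or_eq_and_eq_of_maximizers_eq (hgh : maximizers S g = maximizers S h)
    (hx : x ∈ maximizers S g) (hy : y ∈ S) :
    (g y < g x ∧ h y < h x) ∨ (g y = g x ∧ h y = h x) := by
  have hxh : x ∈ maximizers S h := hgh ▸ hx
  have hiff : g y = g x ↔ h y = h x := by
    rw [← mem_maximizers_iff_eq hx hy, ← mem_maximizers_iff_eq hxh hy, hgh]
  have hgle := (mem_maximizers_iff.1 hx).2 y hy
  have hhle := (mem_maximizers_iff.1 hxh).2 y hy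
  by_cases hgy : g y = g x
  · exact Or.inr ⟨hgy, hiff.1 hgy⟩
  · exact Or.inl ⟨lt_of_le_of_ne hgle hgy, lt_of_le_of_ne hhle (mt hiff.2 hgy)⟩

theorem maximizers_eq_of_maximizers_eq (hne : (maximizers S g).Nonempty)
    (hgh : maximizers S g = maximizers S h)
    (hlt : ∀ x ∈ S, ∀ y ∈ S, g x < g y → h x < h y → k x < k y)
    (heq : ∀ x ∈ S, ∀ y ∈ S, g x = g y → h x = h y → k x = k y) :
    maximizers S k = maximizers S g := by
  obtain ⟨x, hx⟩ := hne
  have hxS : x ∈ S := (mem_maximizers_iff.1 hx).1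
  have hcmp : ∀ y ∈ S, (k y < k x ∧ g y < g x) ∨ (k y = k x ∧ g y = g x) := fun y hy =>
    (lt_and_lt_or_eq_and_eq_of_maximizers_eq hgh hx hy).imp
      (fun ⟨hg, hh⟩ => ⟨hlt y hy x hxS hg hh, hg⟩)
      (fun ⟨hg, hh⟩ => ⟨heq y hy x hxS hg hh, hg⟩)
  have hxk : x ∈ maximizers S k := mem_maximizers_iff.2
    ⟨hxS, fun y hy => (hcmp y hy).elim (fun h => h.1.le) (fun h => h.1.le)⟩
  ext y
  by_cases hy : y ∈ S
  · rw [mem_maximizers_iff_eq hxk hy, mem_maximizers_iff_eq hx hy]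
    rcases hcmp y hy with ⟨hk, hg⟩ | ⟨hk, hg⟩
    · exact iff_of_false hk.ne hg.ne
    · exact iff_of_true hk hg
  · exact iff_of_false (fun hm => hy hm.1) (fun hm => hy hm.1)

end Maximizers

theorem monotonic_argmax_weak_reinforcement_general
    {P : Type*} [Fintype P]
    (c : P → ℕ) (b : ℕ)
    (f : List (Finset P) → Finset P → ℝ)
    (F : List (Finset P) → Set (Finset P))
    (hF : ∀ A : List (Finset P),
      F A = {π : Finset P | ∑ p ∈ π, c p ≤ b ∧
        ∀ π' : Finset P, ∑ p ∈ π', c p ≤ b → f A π' ≤ f A π})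
    (hmono1 : ∀ (A A' : List (Finset P)) (π π' : Finset P),
      ∑ p ∈ π, c p ≤ b → ∑ p ∈ π', c p ≤ b →
      f A π < f A π' → f A' π < f A' π' → f (A ++ A') π < f (A ++ A') π')
    (hmono2 : ∀ (A A' : List (Finset P)) (π π' : Finset P),
      ∑ p ∈ π, c p ≤ b → ∑ p ∈ π', c p ≤ b →
      f A π = f A π' → f A' π = f A' π' → f (A ++ A') π = f (A ++ A') π') :
    ∀ A A' : List (Finset P), F A = F A' → F (A ++ A') = F A := by
  intro A A' hAA'
  set feasible : Set (Finset P) := {π | ∑ p ∈ π, c p ≤ b}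
  have hF' : ∀ B, F B = maximizers feasible (f B) := fun B => by
    ext π
    rw [hF B, mem_maximizers_iff]
    rfl
  simp only [hF'] at hAA' ⊢
  have hne : feasible.Nonempty := ⟨∅, by simp [feasible]⟩
  exact maximizers_eq_of_maximizers_eq (maximizers_nonempty feasible.toFinite hne) hAA'
    (fun π hπ π' hπ' => hmono1 A A' π π' hπ hπ')
    (fun π hπ π' hπ' => hmono2 A A' π π' hπ hπ')

/-- Every monotonic argmax PB rule satisfies weak reinforcement. -/
theorem monotonic_argmax_weak_reinforcement
    {P : Type*} [Fintype P] [DecidableEq P]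
    (c : P → ℕ) (b : ℕ)
    (f : List (Finset P) → Finset P → ℝ)
    (F : List (Finset P) → Set (Finset P))
    (hF : ∀ A : List (Finset P),
      F A = {π : Finset P | ∑ p ∈ π, c p ≤ b ∧
        ∀ π' : Finset P, ∑ p ∈ π', c p ≤ b → f A π' ≤ f A π})
    (hmono1 : ∀ (A A' : List (Finset P)) (π π' : Finset P),
      ∑ p ∈ π, c p ≤ b → ∑ p ∈ π', c p ≤ b →
      f A π < f A π' → f A' π < f A' π' → f (A ++ A') π < f (A ++ A') π')
    (hmono2 : ∀ (A A' : List (Finset P)) (π π' : Finset P),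
      ∑ p ∈ π, c p ≤ b → ∑ p ∈ π', c p ≤ b →
      f A π = f A π' → f A' π = f A' π' → f (A ++ A') π = f (A ++ A') π') :
    ∀ A A' : List (Finset P), F A = F A' → F (A ++ A') = F A :=
  monotonic_argmax_weak_reinforcement_general c b f F hF hmono1 hmono2
end

section
/- The rule F̃^N_cost is the MLE of the noise model N_Ncost: let I = ⟨P, c, b⟩ be a PB instance with P nonempty and c(p) ≥ 1 for all p ∈ P, and for each nonempty feasible allocation π define ℙ(A | π) = c(A ∩ π) / (2^{|P|−1} · c(π)) for every ballot A ⊆ P. Then (i) for each nonempty feasible π, the values ℙ(A | π) over all A ⊆ P are nonnegative and sum to 1, and (ii) for every profile A = (A_1, …, A_n), the set of nonempty feasible allocations π maximizing the likelihood ∏_{i=1}^n ℙ(A_i | π) equals the set of nonempty feasible allocations maximizing ∏_{i=1}^n c(A_i ∩ π) / c(π). -/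
/-!
Pairing each ballot `A` with its complement splits `π` into `A ∩ π` and `Aᶜ ∩ π`, so summing
`c(A ∩ π)` over all `2 ^ |P|` ballots counts `c(π)` exactly `2 ^ (|P| - 1)` times; this is why
`ℙ(· | π)` is normalised. The likelihood of a profile of `n` ballots is
`(2 ^ (|P| - 1))⁻ⁿ ∏ᵢ c(Aᵢ ∩ π) / c(π)`, a positive constant multiple of the second objective, so
both have the same maximisers.
-/

section

open Finset

variable {P : Type*} [Fintype P] [DecidableEq P]

theorem Finset.sum_univ_sum_inter (s : Finset P) (f : P → ℕ) :
    ∑ A : Finset P, ∑ p ∈ A ∩ s, f p = 2 ^ (Fintype.card P - 1) * ∑ p ∈ s, f p := by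
  rcases s.eq_empty_or_nonempty with rfl | ⟨a, -⟩
  · simp
  have hcard : 1 ≤ Fintype.card P := Fintype.card_pos_iff.2 ⟨a⟩
  have hpair (A : Finset P) : ∑ p ∈ A ∩ s, f p + ∑ p ∈ Aᶜ ∩ s, f p = ∑ p ∈ s, f p := by
    rw [inter_comm A, inter_comm Aᶜ, ← sdiff_eq_inter_compl, sum_inter_add_sum_sdiff]
  have hcompl : ∑ A : Finset P, ∑ p ∈ Aᶜ ∩ s, f p = ∑ A : Finset P, ∑ p ∈ A ∩ s, f p :=
    Fintype.sum_bijective _ compl_bijective _ _ fun _ => rfl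
  apply Nat.eq_of_mul_eq_mul_left two_pos
  calc 2 * ∑ A : Finset P, ∑ p ∈ A ∩ s, f p
      = ∑ A : Finset P, (∑ p ∈ A ∩ s, f p + ∑ p ∈ Aᶜ ∩ s, f p) := by
        rw [sum_add_distrib, hcompl, two_mul]
    _ = 2 ^ Fintype.card P * ∑ p ∈ s, f p := by
        simp only [hpair, sum_const, card_univ, Fintype.card_finset, smul_eq_mul]
    _ = 2 * (2 ^ (Fintype.card P - 1) * ∑ p ∈ s, f p) := by
        rw [← mul_assoc, ← pow_succ', Nat.sub_add_cancel hcard]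

/-- The probability `ℙ(A | π)` of ballot `A` under the noise model `N_Ncost`. -/
noncomputable def costNoise (c : P → ℕ) (A π : Finset P) : ℝ :=
  (∑ p ∈ A ∩ π, c p : ℝ) / (2 ^ (Fintype.card P - 1) * ∑ p ∈ π, c p)

theorem costNoise_nonneg (c : P → ℕ) (A π : Finset P) : 0 ≤ costNoise c A π := by
  unfold costNoise
  positivity

theorem sum_costNoise (c : P → ℕ) {π : Finset P} (hπ : ∑ p ∈ π, c p ≠ 0) :
    ∑ A : Finset P, costNoise c A π = 1 := by
  have hsum := congrArg (Nat.cast (R := ℝ)) (sum_univ_sum_inter π c)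
  push_cast at hsum
  simp only [costNoise, Nat.cast_sum]
  rw [← sum_div, hsum, div_self]
  exact_mod_cast mul_ne_zero (pow_ne_zero _ two_ne_zero) hπ

theorem prod_map_costNoise (c : P → ℕ) (A : List (Finset P)) (π : Finset P) :
    (A.map (costNoise c · π)).prod = ((2 : ℝ) ^ (Fintype.card P - 1))⁻¹ ^ A.length *
      (A.map fun Ai => (∑ p ∈ Ai ∩ π, c p : ℝ) / (∑ p ∈ π, c p : ℝ)).prod := by
  have hfactor : (costNoise c · π) = fun Ai =>
      ((2 : ℝ) ^ (Fintype.card P - 1))⁻¹ * ((∑ p ∈ Ai ∩ π, c p : ℝ) / (∑ p ∈ π, c p : ℝ)) := by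
    funext Ai
    rw [costNoise, Nat.cast_sum, mul_comm (2 ^ _ : ℝ), ← div_div, div_eq_inv_mul _ (2 ^ _ : ℝ)]
  rw [hfactor, List.prod_map_mul, List.map_const', List.prod_replicate]
end

theorem nash_cost_relative_is_MLE_general
    {P : Type*} [Fintype P] [DecidableEq P]
    (c : P → ℕ) (hc : ∀ p, 1 ≤ c p) (b : ℕ)
    (Pr : Finset P → Finset P → ℝ)
    (hPr : ∀ A π : Finset P,
      Pr A π = (∑ p ∈ A ∩ π, c p : ℝ) / (2 ^ (Fintype.card P - 1) * ∑ p ∈ π, c p)) :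
    (∀ π : Finset P, π.Nonempty → ∑ p ∈ π, c p ≤ b →
      (∀ A : Finset P, 0 ≤ Pr A π) ∧ ∑ A : Finset P, Pr A π = 1) ∧
    (∀ A : List (Finset P),
      {π : Finset P | π.Nonempty ∧ ∑ p ∈ π, c p ≤ b ∧
        ∀ π' : Finset P, π'.Nonempty → ∑ p ∈ π', c p ≤ b →
          (A.map (fun Ai => Pr Ai π')).prod ≤ (A.map (fun Ai => Pr Ai π)).prod}
      =
      {π : Finset P | π.Nonempty ∧ ∑ p ∈ π, c p ≤ b ∧
        ∀ π' : Finset P, π'.Nonempty → ∑ p ∈ π', c p ≤ b →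
          (A.map (fun Ai => (∑ p ∈ Ai ∩ π', c p : ℝ) / (∑ p ∈ π', c p : ℝ))).prod ≤
          (A.map (fun Ai => (∑ p ∈ Ai ∩ π, c p : ℝ) / (∑ p ∈ π, c p : ℝ))).prod}) := by
  obtain rfl : Pr = costNoise c := funext₂ hPr
  refine ⟨fun π hπ _ => ⟨(costNoise_nonneg c · π), ?_⟩, fun A => ?_⟩
  · exact sum_costNoise c (Finset.sum_pos (fun p _ => hc p) hπ).ne'
  · have hscale : (0 : ℝ) < ((2 : ℝ) ^ (Fintype.card P - 1))⁻¹ ^ A.length := by positivity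
    simp only [prod_map_costNoise, mul_le_mul_iff_right₀ hscale]

/-- The rule `F̃^N_cost` is the MLE of the noise model `N_Ncost`:
with `ℙ(A | π) = c(A ∩ π) / (2 ^ (|P| - 1) * c(π))` for nonempty feasible `π`,
(i) `ℙ(· | π)` is a probability distribution over ballots, and
(ii) maximizing the likelihood over nonempty feasible allocations is the same as
maximizing `∏_i c(Aᵢ ∩ π) / c(π)`. -/
theorem nash_cost_relative_is_MLE
    {P : Type*} [Fintype P] [DecidableEq P] [Nonempty P]
    (c : P → ℕ) (hc : ∀ p, 1 ≤ c p) (b : ℕ)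
    (Pr : Finset P → Finset P → ℝ)
    (hPr : ∀ A π : Finset P,
      Pr A π = (∑ p ∈ A ∩ π, c p : ℝ) / (2 ^ (Fintype.card P - 1) * ∑ p ∈ π, c p)) :
    (∀ π : Finset P, π.Nonempty → ∑ p ∈ π, c p ≤ b →
      (∀ A : Finset P, 0 ≤ Pr A π) ∧ ∑ A : Finset P, Pr A π = 1) ∧
    (∀ A : List (Finset P),
      {π : Finset P | π.Nonempty ∧ ∑ p ∈ π, c p ≤ b ∧
        ∀ π' : Finset P, π'.Nonempty → ∑ p ∈ π', c p ≤ b →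
          (A.map (fun Ai => Pr Ai π')).prod ≤ (A.map (fun Ai => Pr Ai π)).prod}
      =
      {π : Finset P | π.Nonempty ∧ ∑ p ∈ π, c p ≤ b ∧
        ∀ π' : Finset P, π'.Nonempty → ∑ p ∈ π', c p ≤ b →
          (A.map (fun Ai => (∑ p ∈ Ai ∩ π', c p : ℝ) / (∑ p ∈ π', c p : ℝ))).prod ≤
          (A.map (fun Ai => (∑ p ∈ Ai ∩ π, c p : ℝ) / (∑ p ∈ π, c p : ℝ))).prod}) :=
  nash_cost_relative_is_MLE_general c hc b Pr hPr
end

section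
/- The rule F̃^N_app is the MLE of the noise model N_Napp: let I = ⟨P, c, b⟩ be a PB instance with P nonempty, and for each nonempty feasible allocation π define ℙ(A | π) = |A ∩ π| / (2^{|P|−1} · |π|) for every ballot A ⊆ P. Then (i) for each nonempty feasible π, the values ℙ(A | π) over all A ⊆ P are nonnegative and sum to 1, and (ii) for every profile A = (A_1, …, A_n), the set of nonempty feasible allocations π maximizing the likelihood ∏_{i=1}^n ℙ(A_i | π) equals the set of nonempty feasible allocations maximizing ∏_{i=1}^n |A_i ∩ π| / |π|. -/
/-!
Every element of `P` lies in exactly half of the `2 ^ |P|` ballots, so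
`∑_A |A ∩ π| = 2 ^ (|P| - 1) * |π|` and `ℙ(· | π)` is normalized. Moreover
`ℙ(A | π) = 2 ^ -(|P| - 1) * |A ∩ π| / |π|`, so the likelihood of a profile of length `n` is
the positive constant `2 ^ -(n * (|P| - 1))`, independent of `π`, times
`∏_i |Aᵢ ∩ π| / |π|`; the two objectives therefore have the same maximizers.
-/

open Finset

namespace Finset

variable {α : Type*} [Fintype α] [DecidableEq α]

theorem card_filter_mem_univ (a : α) :
    #{A : Finset α | a ∈ A} = 2 ^ (Fintype.card α - 1) := by
  have h_compl : #{A : Finset α | a ∈ A} = #{A : Finset α | a ∉ A} :=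
    card_nbij' compl compl (fun A => by simp) (fun A => by simp) (fun A _ => compl_compl A)
      (fun A _ => compl_compl A)
  have h_total := card_filter_add_card_filter_not (s := (univ : Finset (Finset α))) (a ∈ ·)
  rw [card_univ, Fintype.card_finset] at h_total
  obtain ⟨m, hm⟩ := Nat.exists_eq_add_one_of_ne_zero (Fintype.card_pos_iff.mpr ⟨a⟩).ne'
  rw [hm, pow_succ] at h_total
  rw [hm, Nat.add_sub_cancel]
  omega

theorem sum_card_inter_univ (s : Finset α) :
    ∑ A : Finset α, #(A ∩ s) = 2 ^ (Fintype.card α - 1) * #s := by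
  simp_rw [inter_comm _ s]
  rw [sum_card_inter fun a _ => card_filter_mem_univ a, mul_comm]

end Finset

section NashApp

variable {P : Type*} [Fintype P] [DecidableEq P]

/-- The noise model `N_Napp`: `nappProb A π` is `ℙ(A | π)`. -/
noncomputable def nappProb (A π : Finset P) : ℝ :=
  #(A ∩ π) / (2 ^ (Fintype.card P - 1) * #π)

theorem nappProb_nonneg (A π : Finset P) : 0 ≤ nappProb A π := by
  unfold nappProb
  positivity

theorem sum_nappProb {π : Finset P} (hπ : π.Nonempty) : ∑ A : Finset P, nappProb A π = 1 := by
  have hden : (2 : ℝ) ^ (Fintype.card P - 1) * #π ≠ 0 := by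
    have := hπ.card_pos
    positivity
  simp only [nappProb, ← sum_div, ← Nat.cast_sum, sum_card_inter_univ]
  push_cast
  exact div_self hden

theorem nappProb_eq_mul (A π : Finset P) :
    nappProb A π = ((2 : ℝ) ^ (Fintype.card P - 1))⁻¹ * (#(A ∩ π) / #π) := by
  unfold nappProb
  ring

theorem prod_map_nappProb (L : List (Finset P)) (π : Finset P) :
    (L.map (nappProb · π)).prod =
      ((2 : ℝ) ^ (Fintype.card P - 1))⁻¹ ^ L.length *
        (L.map fun A => (#(A ∩ π) / #π : ℝ)).prod := by
  simp only [nappProb_eq_mul, List.prod_map_mul, List.map_const', List.prod_replicate]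

end NashApp

theorem nash_app_relative_is_MLE_general
    {P : Type*} [Fintype P] [DecidableEq P]
    (c : P → ℕ) (b : ℕ)
    (Pr : Finset P → Finset P → ℝ)
    (hPr : ∀ A π : Finset P,
      Pr A π = ((A ∩ π).card : ℝ) / (2 ^ (Fintype.card P - 1) * π.card)) :
    (∀ π : Finset P, π.Nonempty → ∑ p ∈ π, c p ≤ b →
      (∀ A : Finset P, 0 ≤ Pr A π) ∧ ∑ A : Finset P, Pr A π = 1) ∧
    (∀ A : List (Finset P),
      {π : Finset P | π.Nonempty ∧ ∑ p ∈ π, c p ≤ b ∧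
        ∀ π' : Finset P, π'.Nonempty → ∑ p ∈ π', c p ≤ b →
          (A.map (fun Ai => Pr Ai π')).prod ≤ (A.map (fun Ai => Pr Ai π)).prod}
      =
      {π : Finset P | π.Nonempty ∧ ∑ p ∈ π, c p ≤ b ∧
        ∀ π' : Finset P, π'.Nonempty → ∑ p ∈ π', c p ≤ b →
          (A.map (fun Ai => ((Ai ∩ π').card : ℝ) / (π'.card : ℝ))).prod ≤
          (A.map (fun Ai => ((Ai ∩ π).card : ℝ) / (π.card : ℝ))).prod}) := by
  obtain rfl : Pr = nappProb := funext₂ hPr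
  refine ⟨fun π hπ _ => ⟨fun A => nappProb_nonneg A π, sum_nappProb hπ⟩, fun A => ?_⟩
  have hC : 0 < ((2 : ℝ) ^ (Fintype.card P - 1))⁻¹ ^ A.length := by positivity
  simp only [prod_map_nappProb, mul_le_mul_iff_right₀ hC]

/-- The rule `F̃^N_app` is the MLE of the noise model `N_Napp`:
with `ℙ(A | π) = |A ∩ π| / (2 ^ (|P| - 1) * |π|)` for nonempty feasible `π`,
(i) `ℙ(· | π)` is a probability distribution over ballots, and
(ii) maximizing the likelihood over nonempty feasible allocations is the same as
maximizing `∏_i |Aᵢ ∩ π| / |π|`. -/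
theorem nash_app_relative_is_MLE
    {P : Type*} [Fintype P] [DecidableEq P] [Nonempty P]
    (c : P → ℕ) (b : ℕ)
    (Pr : Finset P → Finset P → ℝ)
    (hPr : ∀ A π : Finset P,
      Pr A π = ((A ∩ π).card : ℝ) / (2 ^ (Fintype.card P - 1) * π.card)) :
    (∀ π : Finset P, π.Nonempty → ∑ p ∈ π, c p ≤ b →
      (∀ A : Finset P, 0 ≤ Pr A π) ∧ ∑ A : Finset P, Pr A π = 1) ∧
    (∀ A : List (Finset P),
      {π : Finset P | π.Nonempty ∧ ∑ p ∈ π, c p ≤ b ∧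
        ∀ π' : Finset P, π'.Nonempty → ∑ p ∈ π', c p ≤ b →
          (A.map (fun Ai => Pr Ai π')).prod ≤ (A.map (fun Ai => Pr Ai π)).prod}
      =
      {π : Finset P | π.Nonempty ∧ ∑ p ∈ π, c p ≤ b ∧
        ∀ π' : Finset P, π'.Nonempty → ∑ p ∈ π', c p ≤ b →
          (A.map (fun Ai => ((Ai ∩ π').card : ℝ) / (π'.card : ℝ))).prod ≤
          (A.map (fun Ai => ((Ai ∩ π).card : ℝ) / (π.card : ℝ))).prod}) :=
  nash_app_relative_is_MLE_general c b Pr hPr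
end

section
/- There is no noise model for which the Nash approval-maximising rule F^N_app is the MLE, even on unit-cost instances: let I be the instance with project set P = {p1, p2}, c(p1) = c(p2) = 1, and budget b = 2 (so every subset of P is feasible), and let F^N_app(I, A) = argmax_{π ⊆ P} ∏_{i} |A_i ∩ π| for every profile A = (A_1, …, A_n). Then there is no family (ℙ(·|π))_{π ⊆ P} of probability distributions over subsets of P such that for every profile A, argmax_{π ⊆ P} ∏_i ℙ(A_i | π) = F^N_app(I, A). -/
/-!
The Nash score `|A ∩ π|` is monotone in `π`, so the full allocation maximizes it for every
single ballot. If likelihood maximizers always coincided with Nash maximizers, each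
distribution `ℙ(·|π)` would then be dominated pointwise by `ℙ(·|P)`; as both sum to `1`
they agree, so every allocation would maximize every likelihood, hence every Nash score —
but the ballot `{p₂}` scores `0` on `∅` and `1` on `P`.
-/

open Finset

def productArgmax {α β M : Type*} [CommMonoid M] [LE M] (f : α → β → M) (A : List α) : Set β :=
  {π | ∀ π', (A.map fun a => f a π').prod ≤ (A.map fun a => f a π).prod}

section
variable {α β M : Type*} [CommMonoid M] [PartialOrder M] {Pr : α → β → ℝ} {score : α → β → M}

lemma mem_productArgmax_singleton {N : Type*} [CommMonoid N] [LE N] (f : α → β → N)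
    (a : α) (π : β) : π ∈ productArgmax f [a] ↔ ∀ π', f a π' ≤ f a π := by
  simp [productArgmax]

lemma score_eq_of_productArgmax_eq [Fintype α] (hsum : ∀ π, ∑ a, Pr a π = 1)
    (hargmax : ∀ A, productArgmax Pr A = productArgmax score A)
    {σ : β} (hσ : ∀ a π, score a π ≤ score a σ) (a : α) (π : β) :
    score a π = score a σ := by
  have hPr_le (a : α) (π : β) : Pr a π ≤ Pr a σ := by
    have hσmem : σ ∈ productArgmax Pr [a] := by
      rw [hargmax, mem_productArgmax_singleton]
      exact hσ a
    exact (mem_productArgmax_singleton Pr a σ).1 hσmem π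
  have hPr_eq (a : α) (π : β) : Pr a π = Pr a σ :=
    (Finset.sum_eq_sum_iff_of_le fun a _ => hPr_le a π).1 (by rw [hsum, hsum]) a (mem_univ a)
  have hπmem : π ∈ productArgmax score [a] := by
    rw [← hargmax, mem_productArgmax_singleton]
    exact fun π' => (hPr_eq a π').trans (hPr_eq a π).symm |>.le
  exact le_antisymm (hσ a π) ((mem_productArgmax_singleton score a π).1 hπmem σ)

end

lemma card_inter_le_card_inter_univ {α : Type*} [Fintype α] [DecidableEq α] (A π : Finset α) :
    #(A ∩ π) ≤ #(A ∩ univ) :=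
  card_le_card (inter_subset_inter_left (subset_univ π))

/-- There is no noise model for which the Nash approval-maximising rule
`F^N_app` is the MLE, even on unit-cost instances: on the instance with two
unit-cost projects and budget 2 (every subset is feasible), no family of
probability distributions `ℙ(·|π)` satisfies that for every profile the set of
likelihood maximizers equals the set of maximizers of `∏_i |Aᵢ ∩ π|`. -/
theorem nash_app_not_MLE :
    ¬ ∃ Pr : Finset (Fin 2) → Finset (Fin 2) → ℝ,
      (∀ π : Finset (Fin 2),
        (∀ A : Finset (Fin 2), 0 ≤ Pr A π) ∧ ∑ A : Finset (Fin 2), Pr A π = 1) ∧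
      (∀ A : List (Finset (Fin 2)),
        {π : Finset (Fin 2) | ∀ π' : Finset (Fin 2),
          (A.map (fun Ai => Pr Ai π')).prod ≤ (A.map (fun Ai => Pr Ai π)).prod}
        =
        {π : Finset (Fin 2) | ∀ π' : Finset (Fin 2),
          (A.map (fun Ai => (Ai ∩ π').card)).prod ≤
          (A.map (fun Ai => (Ai ∩ π).card)).prod}) := by
  rintro ⟨Pr, hPr, hMLE⟩
  have hconst := score_eq_of_productArgmax_eq (score := fun A π => #(A ∩ π))
    (fun π => (hPr π).2) hMLE card_inter_le_card_inter_univ {1} ∅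
  simp at hconst
end

section
/- There is no noise model for which the utilitarian approval-maximising rule F_app is the MLE, even on unit-cost instances: let I be the instance with project set P = {p1, p2}, c(p1) = c(p2) = 1, and budget b = 2 (so every subset of P is feasible), and let F_app(I, A) = argmax_{π ⊆ P} ∑_{i} |A_i ∩ π| for every profile A = (A_1, …, A_n). Then there is no family (ℙ(·|π))_{π ⊆ P} of probability distributions over subsets of P such that for every profile A, argmax_{π ⊆ P} ∏_i ℙ(A_i | π) = F_app(I, A). -/
/-!
A single-voter profile `[S]` already forces the contradiction. Approval maximisation selects exactly
the allocations `π ⊇ S`, so the full allocation `univ` maximises every `ℙ(S | ·)`, and strictly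
beats `∅` on the ballot `S = univ`. Summing over ballots, `ℙ(· | univ)` would have total mass
strictly larger than `ℙ(· | ∅)`, although both are probability distributions.
-/

open Finset

variable {α : Type*} [Fintype α]

theorem forall_card_inter_le_iff_subset [DecidableEq α] {S π : Finset α} :
    (∀ π' : Finset α, #(S ∩ π') ≤ #(S ∩ π)) ↔ S ⊆ π := by
  constructor
  · intro h
    have hcard : #S ≤ #(S ∩ π) := by simpa using h univ
    exact inter_eq_left.mp (eq_of_subset_of_card_le inter_subset_left hcard)
  · intro hS π'
    rw [inter_eq_left.mpr hS]
    exact card_le_card inter_subset_left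

theorem not_exists_argmax_eq_supersets [Nonempty α] :
    ¬ ∃ Pr : Finset α → Finset α → ℝ, (∀ π, ∑ A, Pr A π = 1) ∧
      ∀ S π, (∀ π', Pr S π' ≤ Pr S π) ↔ S ⊆ π := by
  rintro ⟨Pr, hsum, hmax⟩
  have hle : ∀ S, Pr S ∅ ≤ Pr S univ := fun S => (hmax S univ).mpr (subset_univ S) ∅
  have hlt : Pr univ ∅ < Pr univ univ := by
    by_contra! hge
    have hsub : (univ : Finset α) ⊆ ∅ :=
      (hmax univ ∅).mp fun π' => ((hmax univ univ).mpr subset_rfl π').trans hge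
    exact univ_nonempty.ne_empty (subset_empty.mp hsub)
  have := sum_lt_sum (fun S _ => hle S) ⟨univ, mem_univ _, hlt⟩
  linarith [hsum ∅, hsum univ]

/-- There is no noise model for which the utilitarian approval-maximising rule
`F_app` is the MLE, even on unit-cost instances: on the instance with two
unit-cost projects and budget 2 (every subset is feasible), no family of
probability distributions `ℙ(·|π)` satisfies that for every profile the set of
likelihood maximizers equals the set of maximizers of `∑_i |Aᵢ ∩ π|`. -/
theorem app_max_not_MLE :
    ¬ ∃ Pr : Finset (Fin 2) → Finset (Fin 2) → ℝ,
      (∀ π : Finset (Fin 2),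
        (∀ A : Finset (Fin 2), 0 ≤ Pr A π) ∧ ∑ A : Finset (Fin 2), Pr A π = 1) ∧
      (∀ A : List (Finset (Fin 2)),
        {π : Finset (Fin 2) | ∀ π' : Finset (Fin 2),
          (A.map (fun Ai => Pr Ai π')).prod ≤ (A.map (fun Ai => Pr Ai π)).prod}
        =
        {π : Finset (Fin 2) | ∀ π' : Finset (Fin 2),
          (A.map (fun Ai => (Ai ∩ π').card)).sum ≤
          (A.map (fun Ai => (Ai ∩ π).card)).sum}) := by
  rintro ⟨Pr, hprob, hmle⟩
  refine not_exists_argmax_eq_supersets ⟨Pr, fun π => (hprob π).2, fun S π => ?_⟩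
  simpa [forall_card_inter_le_iff_subset] using Set.ext_iff.mp (hmle [S]) π
end

section
/- On unit-cost instances with exhaustive ground truths, the approval-maximising rule is the MLE of the noise model N_app: let I = ⟨P, c, b⟩ be a unit-cost instance (there is ℓ ≥ 1 with c(p) = ℓ for all p ∈ P and ℓ divides b), with ℓ·|P| ≥ b, and for each feasible allocation π define ℙ(A | π) = 2^{|A ∩ π|} / (2^{|P|−|π|} · 3^{|π|}). Then for every profile A = (A_1, …, A_n), the set of exhaustive allocations π maximizing the likelihood ∏_{i=1}^n ℙ(A_i | π) over all exhaustive allocations equals the set of exhaustive allocations maximizing the total approval score ∑_{i=1}^n |A_i ∩ π| over all exhaustive allocations. -/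
/-- A budget allocation is exhaustive if it is feasible and no further project
can be added without exceeding the budget. -/
def Exhaustive {P : Type*} [DecidableEq P] (c : P → ℕ) (b : ℕ) (π : Finset P) : Prop :=
  ∑ p ∈ π, c p ≤ b ∧ ∀ p ∉ π, ¬ (∑ q ∈ insert p π, c q ≤ b)

/-!
Under unit costs every exhaustive allocation contains the same number of projects, so the
denominator `2 ^ (|P| - |π|) * 3 ^ |π|` of `ℙ(A | π)` is the same for all of them. The
likelihood of a profile is then `2 ^ score / const`, strictly increasing in the approval score.
-/

theorem List.prod_map_pow_div_const {α M : Type*} [DivisionCommMonoid M] (l : List α)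
    (x C : M) (f : α → ℕ) :
    (l.map fun a => x ^ f a / C).prod = x ^ (l.map f).sum / C ^ l.length := by
  induction l with
  | nil => simp
  | cons a l ih => simp [ih, pow_add, pow_succ, mul_div_mul_comm, mul_comm]

theorem Exhaustive.card_eq_min_of_unit_cost {P : Type*} [Fintype P] [DecidableEq P]
    {c : P → ℕ} {b ℓ : ℕ} (hℓ : 1 ≤ ℓ) (hc : ∀ p, c p = ℓ) {π : Finset P}
    (hπ : Exhaustive c b π) :
    π.card = min (b / ℓ) (Fintype.card P) := by
  obtain ⟨hfeasible, hmaximal⟩ := hπ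
  have hcost : ∀ s : Finset P, ∑ p ∈ s, c p = s.card * ℓ := fun s => by
    simp [hc, Finset.sum_const]
  rw [hcost] at hfeasible
  by_cases hfull : ∀ p, p ∈ π
  · have hcard : π.card = Fintype.card P := by
      rw [Finset.eq_univ_iff_forall.mpr hfull, Finset.card_univ]
    rw [hcard] at hfeasible ⊢
    exact (min_eq_right ((Nat.le_div_iff_mul_le hℓ).mpr hfeasible)).symm
  · obtain ⟨p, hp⟩ := not_forall.mp hfull
    have hover : b < (π.card + 1) * ℓ := by
      simpa [hcost, Finset.card_insert_of_notMem hp] using hmaximal p hp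
    rw [Nat.div_eq_of_lt_le hfeasible hover, min_eq_left (Finset.card_le_univ π)]

section Likelihood

variable {P : Type*} [Fintype P] [DecidableEq P] (Pr : Finset P → Finset P → ℝ)

def approvalScore (A : List (Finset P)) (π : Finset P) : ℕ :=
  (A.map fun Ai => (Ai ∩ π).card).sum

theorem prod_likelihood_eq
    (hPr : ∀ A π : Finset P,
      Pr A π = (2 ^ (A ∩ π).card : ℝ) / (2 ^ (Fintype.card P - π.card) * 3 ^ π.card))
    (A : List (Finset P)) (π : Finset P) :
    (A.map fun Ai => Pr Ai π).prod =
      2 ^ approvalScore A π / (2 ^ (Fintype.card P - π.card) * 3 ^ π.card) ^ A.length := by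
  rw [approvalScore, ← List.prod_map_pow_div_const]
  exact congrArg List.prod (List.map_congr_left fun Ai _ => hPr Ai π)

theorem prod_likelihood_le_iff_of_card_eq
    (hPr : ∀ A π : Finset P,
      Pr A π = (2 ^ (A ∩ π).card : ℝ) / (2 ^ (Fintype.card P - π.card) * 3 ^ π.card))
    (A : List (Finset P)) {π π' : Finset P} (hcard : π'.card = π.card) :
    (A.map fun Ai => Pr Ai π').prod ≤ (A.map fun Ai => Pr Ai π).prod ↔
      approvalScore A π' ≤ approvalScore A π := by
  rw [prod_likelihood_eq Pr hPr, prod_likelihood_eq Pr hPr, hcard,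
    div_le_div_iff_of_pos_right (by positivity)]
  exact pow_le_pow_iff_right₀ one_lt_two

end Likelihood

theorem app_max_MLE_unit_cost_exhaustive_general
    {P : Type*} [Fintype P] [DecidableEq P]
    (c : P → ℕ) (b ℓ : ℕ) (hℓ : 1 ≤ ℓ) (hc : ∀ p, c p = ℓ)
    (Pr : Finset P → Finset P → ℝ)
    (hPr : ∀ A π : Finset P,
      Pr A π = (2 ^ (A ∩ π).card : ℝ) / (2 ^ (Fintype.card P - π.card) * 3 ^ π.card)) :
    ∀ A : List (Finset P),
      {π : Finset P | Exhaustive c b π ∧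
        ∀ π' : Finset P, Exhaustive c b π' →
          (A.map (fun Ai => Pr Ai π')).prod ≤ (A.map (fun Ai => Pr Ai π)).prod}
      =
      {π : Finset P | Exhaustive c b π ∧
        ∀ π' : Finset P, Exhaustive c b π' →
          (A.map (fun Ai => (Ai ∩ π').card)).sum ≤
          (A.map (fun Ai => (Ai ∩ π).card)).sum} := by
  intro A
  have hcompare : ∀ {π π'}, Exhaustive c b π → Exhaustive c b π' →
      ((A.map fun Ai => Pr Ai π').prod ≤ (A.map fun Ai => Pr Ai π).prod ↔
        approvalScore A π' ≤ approvalScore A π) := fun hπ hπ' =>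
    prod_likelihood_le_iff_of_card_eq Pr hPr A <| by
      rw [hπ.card_eq_min_of_unit_cost hℓ hc, hπ'.card_eq_min_of_unit_cost hℓ hc]
  ext π
  exact and_congr_right fun hπ => forall₂_congr fun _ hπ' => hcompare hπ hπ'

/-- On unit-cost instances with exhaustive ground truths, the approval-maximising
rule is the MLE of the noise model `N_app` given by
`ℙ(A | π) = 2 ^ |A ∩ π| / (2 ^ (|P| - |π|) * 3 ^ |π|)`: for every profile, the
exhaustive allocations maximizing the likelihood are exactly the exhaustive
allocations maximizing the total approval score `∑_i |Aᵢ ∩ π|`. -/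
theorem app_max_MLE_unit_cost_exhaustive
    {P : Type*} [Fintype P] [DecidableEq P]
    (c : P → ℕ) (b ℓ : ℕ) (hℓ : 1 ≤ ℓ) (hc : ∀ p, c p = ℓ) (hdvd : ℓ ∣ b)
    (hPb : b ≤ ℓ * Fintype.card P)
    (Pr : Finset P → Finset P → ℝ)
    (hPr : ∀ A π : Finset P,
      Pr A π = (2 ^ (A ∩ π).card : ℝ) / (2 ^ (Fintype.card P - π.card) * 3 ^ π.card)) :
    ∀ A : List (Finset P),
      {π : Finset P | Exhaustive c b π ∧
        ∀ π' : Finset P, Exhaustive c b π' →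
          (A.map (fun Ai => Pr Ai π')).prod ≤ (A.map (fun Ai => Pr Ai π)).prod}
      =
      {π : Finset P | Exhaustive c b π ∧
        ∀ π' : Finset P, Exhaustive c b π' →
          (A.map (fun Ai => (Ai ∩ π').card)).sum ≤
          (A.map (fun Ai => (Ai ∩ π).card)).sum} :=
  app_max_MLE_unit_cost_exhaustive_general c b ℓ hℓ hc Pr hPr
end

section
/- On unit-cost instances the greedy cost approval rule coincides with approval maximisation over exhaustive allocations: let I = ⟨P, c, b⟩ be a unit-cost instance (there is ℓ ≥ 1 with c(p) = ℓ for all p ∈ P and ℓ divides b) with ℓ·|P| ≥ b. Then for every profile A, the set of allocations returned by the greedy cost approval rule F_greed(I, A) equals the set of exhaustive allocations π maximizing ∑_{p ∈ π} n_p^A over all exhaustive allocations, where n_p^A is the number of ballots in A containing p. -/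
/-!
With unit cost `ℓ` and budget `ℓ * k ≤ ℓ * |P|`, an allocation is exhaustive iff it has
exactly `k` projects, and the greedy procedure along any enumeration selects its first `k` projects.
Both sides are therefore the `k`-sets that no project outside outscores: a greedy allocation is
one because the enumeration ranks by score, and every such set is greedy for the enumeration
that breaks score ties in its favour; an exhaustive allocation of maximal score is one by an
exchange argument, and conversely every such set dominates any other `k`-set.
-/

/-- Examine the projects in the order given by the list, selecting each project
whenever the total cost of selected projects stays within the budget. -/
def greedAux {P : Type*} [DecidableEq P] (c : P → ℕ) (b : ℕ) :
    List P → Finset P → Finset P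
  | [], sel => sel
  | p :: rest, sel =>
      if ∑ q ∈ insert p sel, c q ≤ b then greedAux c b rest (insert p sel)
      else greedAux c b rest sel

/-- The approval score of project `p` in profile `A`: the number of ballots
containing `p`. -/
def appScore {P : Type*} [DecidableEq P] (A : List (Finset P)) (p : P) : ℕ :=
  A.countP (fun Ai => decide (p ∈ Ai))

/-- The greedy cost approval rule: all allocations obtained by greedily examining
the projects along some linear order (given as a duplicate-free enumeration of
all projects) that ranks projects with strictly higher approval scores first. -/
def Fgreed {P : Type*} [Fintype P] [DecidableEq P] (c : P → ℕ) (b : ℕ)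
    (A : List (Finset P)) : Set (Finset P) :=
  {π : Finset P | ∃ L : List P, L.Nodup ∧ (∀ p, p ∈ L) ∧
    (∀ p p' : P, appScore A p' < appScore A p → L.idxOf p < L.idxOf p') ∧
    π = greedAux c b L ∅}

open Finset

section UnitCost

variable {P : Type*} {c : P → ℕ} {ℓ : ℕ}

theorem sum_eq_mul_card_of_unit_cost (hc : ∀ p, c p = ℓ) (s : Finset P) :
    ∑ p ∈ s, c p = ℓ * #s := by
  simp [hc, mul_comm]

variable [DecidableEq P]

theorem exhaustive_iff_card_eq [Fintype P] (hℓ : 0 < ℓ) (hc : ∀ p, c p = ℓ) {k : ℕ}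
    (hk : k ≤ Fintype.card P) (π : Finset P) :
    Exhaustive c (ℓ * k) π ↔ #π = k := by
  simp only [Exhaustive, sum_eq_mul_card_of_unit_cost hc, Nat.mul_le_mul_left_iff hℓ]
  constructor
  · rintro ⟨hle, hfull⟩
    by_contra hne
    obtain ⟨p, hp⟩ : ∃ p, p ∉ π := by
      by_contra! hall
      rw [eq_univ_iff_forall.2 hall, card_univ] at hle hne
      omega
    exact hfull p hp (by rw [card_insert_of_notMem hp]; omega)
  · rintro rfl
    exact ⟨le_rfl, fun p hp => by rw [card_insert_of_notMem hp]; omega⟩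

theorem greedAux_unit_cost (hℓ : 0 < ℓ) (hc : ∀ p, c p = ℓ) (k : ℕ) :
    ∀ (L : List P) (sel : Finset P), L.Nodup → (∀ p ∈ L, p ∉ sel) →
      greedAux c (ℓ * k) L sel = sel ∪ (L.take (k - #sel)).toFinset
  | [], sel, _, _ => by simp [greedAux]
  | p :: rest, sel, hnd, hdisj => by
    obtain ⟨hp_rest, hnd_rest⟩ := List.nodup_cons.mp hnd
    have hp : p ∉ sel := hdisj p List.mem_cons_self
    rw [greedAux, sum_eq_mul_card_of_unit_cost hc, card_insert_of_notMem hp]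
    simp only [Nat.mul_le_mul_left_iff hℓ]
    split_ifs with h
    · have hdisj' : ∀ q ∈ rest, q ∉ insert p sel := fun q hq => by
        rw [mem_insert, not_or]
        exact ⟨fun hqp => hp_rest (hqp ▸ hq), hdisj q (List.mem_cons_of_mem _ hq)⟩
      rw [greedAux_unit_cost hℓ hc k rest _ hnd_rest hdisj', card_insert_of_notMem hp,
        show k - #sel = k - (#sel + 1) + 1 by omega, List.take_succ_cons, List.toFinset_cons,
        union_insert, insert_union]
    · rw [greedAux_unit_cost hℓ hc k rest sel hnd_rest
          fun q hq => hdisj q (List.mem_cons_of_mem _ hq), show k - #sel = 0 by omega]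
      simp

end UnitCost

section TopSet

variable {α M : Type*}

def IsTopSet [LE M] (f : α → M) (s : Finset α) : Prop :=
  ∀ p ∈ s, ∀ q ∉ s, f q ≤ f p

variable [DecidableEq α] [AddCommMonoid M] [LinearOrder M] {f : α → M} {s t : Finset α}

theorem IsTopSet.sum_le_sum [IsOrderedAddMonoid M] (hs : IsTopSet f s) (hcard : #t = #s) :
    ∑ p ∈ t, f p ≤ ∑ p ∈ s, f p := by
  have hcard' : #(t \ s) = #(s \ t) := card_sdiff_comm hcard
  have hdiff : ∑ p ∈ t \ s, f p ≤ ∑ p ∈ s \ t, f p := by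
    rcases (s \ t).eq_empty_or_nonempty with h | h
    · rw [h, card_empty, card_eq_zero] at hcard'
      simp [hcard', h]
    obtain ⟨m, hm, hmin⟩ := (s \ t).exists_min_image f h
    calc ∑ p ∈ t \ s, f p
        ≤ #(t \ s) • f m :=
          sum_le_card_nsmul _ _ _ fun q hq => hs m (mem_sdiff.1 hm).1 q (mem_sdiff.1 hq).2
      _ = #(s \ t) • f m := by rw [hcard']
      _ ≤ ∑ p ∈ s \ t, f p := card_nsmul_le_sum _ _ _ hmin
  calc ∑ p ∈ t, f p = ∑ p ∈ t ∩ s, f p + ∑ p ∈ t \ s, f p :=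
        (sum_inter_add_sum_sdiff _ _ _).symm
    _ ≤ ∑ p ∈ s ∩ t, f p + ∑ p ∈ s \ t, f p := by rw [inter_comm]; gcongr
    _ = ∑ p ∈ s, f p := sum_inter_add_sum_sdiff _ _ _

theorem isTopSet_of_forall_sum_le [IsOrderedCancelAddMonoid M]
    (hmax : ∀ t : Finset α, #t = #s → ∑ p ∈ t, f p ≤ ∑ p ∈ s, f p) :
    IsTopSet f s := by
  intro p hp q hq
  by_contra! hlt
  have hq' : q ∉ s.erase p := fun h => hq (mem_of_mem_erase h)
  have hswap := hmax (insert q (s.erase p))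
    (by rw [card_insert_of_notMem hq', card_erase_add_one hp])
  rw [sum_insert hq', ← add_sum_erase s f hp] at hswap
  exact hswap.not_gt (add_lt_add_left hlt _)

end TopSet

section Enumeration

variable {α β : Type*} [DecidableEq α] [LinearOrder β] {L : List α}

theorem card_le_length_of_forall_mem (hL : ∀ p, p ∈ L) (s : Finset α) : #s ≤ L.length :=
  (card_le_card fun p _ => List.mem_toFinset.2 (hL p)).trans (List.toFinset_card_le L)

theorem isTopSet_toFinset_take {f : α → β} (hL : ∀ p, p ∈ L)
    (hrank : ∀ p q, f q < f p → L.idxOf p < L.idxOf q) (k : ℕ) :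
    IsTopSet f (L.take k).toFinset := by
  intro p hp q hq
  rw [List.mem_toFinset, List.mem_take_iff_idxOf_lt (hL _)] at hp hq
  by_contra! h
  exact hq ((hrank q p h).trans hp)

theorem toFinset_take_card_eq (hnd : L.Nodup) (hL : ∀ p, p ∈ L) {s : Finset α}
    (hs : ∀ p ∈ s, ∀ q ∉ s, L.idxOf p < L.idxOf q) :
    (L.take #s).toFinset = s := by
  have hmem : ∀ p, p ∈ (L.take #s).toFinset ↔ L.idxOf p < #s := fun p => by
    rw [List.mem_toFinset, List.mem_take_iff_idxOf_lt (hL p)]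
  have hcard : #(L.take #s).toFinset = #s := by
    rw [List.toFinset_card_of_nodup (hnd.sublist (List.take_sublist _ _)), List.length_take,
      min_eq_left (card_le_length_of_forall_mem hL s)]
  have hsub : (L.take #s).toFinset ⊆ s := by
    intro q hq
    by_contra hqs
    have hlt : #s < #(L.take #s).toFinset := by
      refine card_lt_card ⟨fun p hp => ?_, fun h => hqs (h hq)⟩
      rw [hmem] at hq ⊢
      exact (hs p hp q hqs).trans hq
    omega
  exact eq_of_subset_of_card_le hsub hcard.ge

theorem exists_enum_idxOf_lt_of_lt [Fintype α] (key : α → β) :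
    ∃ L : List α, L.Nodup ∧ (∀ p, p ∈ L) ∧
      ∀ p q, key q < key p → L.idxOf p < L.idxOf q := by
  set L := (univ : Finset α).toList.mergeSort fun a b => decide (key b ≤ key a)
  have hperm : L.Perm univ.toList := List.mergeSort_perm _ _
  have hL : ∀ p, p ∈ L := fun p => hperm.mem_iff.2 (mem_toList.2 (mem_univ p))
  have hsorted : L.Pairwise fun a b => key b ≤ key a := by
    simpa using List.pairwise_mergeSort (le := fun a b => decide (key b ≤ key a))
      (by simp only [decide_eq_true_eq]; exact fun a b c hab hbc => hbc.trans hab)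
      (by simp only [Bool.or_eq_true, decide_eq_true_eq]; exact fun a b => le_total _ _)
      univ.toList
  refine ⟨L, hperm.nodup_iff.2 (nodup_toList _), hL, fun p q hlt => ?_⟩
  have hp := List.idxOf_lt_length_iff.2 (hL p)
  have hq := List.idxOf_lt_length_iff.2 (hL q)
  rcases lt_trichotomy (L.idxOf p) (L.idxOf q) with h | h | h
  · exact h
  · rw [(List.idxOf_inj (hL p)).1 h] at hlt
    exact absurd hlt (lt_irrefl _)
  · have := List.pairwise_iff_getElem.1 hsorted _ _ hq hp h
    rw [List.getElem_idxOf, List.getElem_idxOf] at this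
    exact absurd hlt this.not_gt

end Enumeration

theorem mem_fgreed_unit_cost_iff {P : Type*} [Fintype P] [DecidableEq P] {c : P → ℕ}
    {ℓ k : ℕ} (hℓ : 0 < ℓ) (hc : ∀ p, c p = ℓ) (hk : k ≤ Fintype.card P)
    (A : List (Finset P)) (π : Finset P) :
    π ∈ Fgreed c (ℓ * k) A ↔ #π = k ∧ IsTopSet (appScore A) π := by
  have greedy_eq_take (L : List P) (hnd : L.Nodup) :
      greedAux c (ℓ * k) L ∅ = (L.take k).toFinset := by
    simpa using greedAux_unit_cost hℓ hc k L ∅ hnd fun p _ => notMem_empty p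
  constructor
  · rintro ⟨L, hnd, hL, hrank, rfl⟩
    rw [greedy_eq_take L hnd]
    refine ⟨?_, isTopSet_toFinset_take hL hrank k⟩
    rw [List.toFinset_card_of_nodup (hnd.sublist (List.take_sublist _ _)), List.length_take,
      min_eq_left (hk.trans (card_le_length_of_forall_mem hL univ))]
  · rintro ⟨rfl, htop⟩
    -- ties in the score are broken in favour of members of `π`
    obtain ⟨L, hnd, hL, hrank⟩ :=
      exists_enum_idxOf_lt_of_lt fun p => toLex (appScore A p, decide (p ∈ π))
    refine ⟨L, hnd, hL, fun p q h => hrank p q (Prod.Lex.toLex_lt_toLex.2 (Or.inl h)), ?_⟩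
    rw [greedy_eq_take L hnd, toFinset_take_card_eq hnd hL fun p hp q hq => hrank p q ?_]
    rcases (htop p hp q hq).lt_or_eq with h | h
    · exact Prod.Lex.toLex_lt_toLex.2 (Or.inl h)
    · exact Prod.Lex.toLex_lt_toLex.2 (Or.inr ⟨h, by simp [hp, hq]⟩)

/-- On unit-cost instances, the greedy cost approval rule coincides with approval
maximisation over exhaustive allocations. -/
theorem greedy_eq_app_max_unit_cost
    {P : Type*} [Fintype P] [DecidableEq P]
    (c : P → ℕ) (b ℓ : ℕ) (hℓ : 1 ≤ ℓ) (hc : ∀ p, c p = ℓ) (hdvd : ℓ ∣ b)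
    (hPb : b ≤ ℓ * Fintype.card P)
    (A : List (Finset P)) :
    Fgreed c b A =
      {π : Finset P | Exhaustive c b π ∧
        ∀ π' : Finset P, Exhaustive c b π' →
          ∑ p ∈ π', appScore A p ≤ ∑ p ∈ π, appScore A p} := by
  obtain ⟨k, rfl⟩ := hdvd
  have hk : k ≤ Fintype.card P := Nat.le_of_mul_le_mul_left hPb hℓ
  ext π
  simp only [Set.mem_ofPred_eq, mem_fgreed_unit_cost_iff hℓ hc hk,
    exhaustive_iff_card_eq hℓ hc hk]
  constructor
  · rintro ⟨rfl, htop⟩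
    exact ⟨rfl, fun π' hπ' => htop.sum_le_sum hπ'⟩
  · rintro ⟨rfl, hmax⟩
    exact ⟨rfl, isTopSet_of_forall_sum_le hmax⟩
end

section
/- The greedy cost approval rule fails weak reinforcement: let I be the instance with projects p1, p2, p3 of costs c(p1) = 2, c(p2) = 2, c(p3) = 3 and budget b = 4, let A be the profile consisting of 10 ballots {p1}, 1 ballot {p2}, and 9 ballots {p3}, and let A' be the profile consisting of 1 ballot {p1}, 10 ballots {p2}, and 9 ballots {p3}. Then F_greed(I, A) = F_greed(I, A') = {{p1, p2}}, but F_greed(I, A ++ A') = {{p3}} ≠ {{p1, p2}}; hence F_greed violates weak reinforcement. -/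
/-!
On `A` and on `A'` the project `p3` (score 9) is ranked between the two cost-2 projects, so
greedy takes the top one, skips `p3` because `2 + 3 > 4`, and then takes the other one.
On `A ++ A'` the project `p3` has score 18 against 11 and 11, so it is examined first and
neither cost-2 project fits next to it. With three projects there are only six
enumerations, so each of these computations is checked exhaustively.
-/

theorem mem_permutations'_of_nodup_of_forall_mem {P : Type*} {l L : List P} (hl : l.Nodup)
    (hl_univ : ∀ p, p ∈ l) (hL : L.Nodup) (hL_univ : ∀ p, p ∈ L) : L ∈ l.permutations' :=
  List.mem_permutations'.2 <|
    (List.perm_ext_iff_of_nodup hL hl).2 fun p => iff_of_true (hL_univ p) (hl_univ p)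

theorem Fgreed_eq_singleton {P : Type*} [Fintype P] [DecidableEq P] {c : P → ℕ} {b : ℕ}
    {A : List (Finset P)} {X : Finset P} (l : List P) (hl : l.Nodup) (hl_univ : ∀ p, p ∈ l)
    (h_greed : ∀ L ∈ l.permutations',
      (∀ p p' : P, appScore A p' < appScore A p → L.idxOf p < L.idxOf p') →
        greedAux c b L ∅ = X)
    (h_exists : ∃ L ∈ l.permutations',
      ∀ p p' : P, appScore A p' < appScore A p → L.idxOf p < L.idxOf p') :
    Fgreed c b A = {X} := by
  ext π
  constructor
  · rintro ⟨L, hL, hL_univ, h_rank, rfl⟩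
    exact h_greed L (mem_permutations'_of_nodup_of_forall_mem hl hl_univ hL hL_univ) h_rank
  · rintro rfl
    obtain ⟨L, hL_perm, h_rank⟩ := h_exists
    have hL_perm' := List.mem_permutations'.1 hL_perm
    exact ⟨L, hL_perm'.nodup_iff.2 hl, fun p => hL_perm'.mem_iff.2 (hl_univ p), h_rank,
      (h_greed L hL_perm h_rank).symm⟩

/-- The greedy cost approval rule fails weak reinforcement: on the instance with
projects `p1, p2, p3` of costs `2, 2, 3` and budget `4`, with profile `A`
consisting of 10 ballots `{p1}`, 1 ballot `{p2}` and 9 ballots `{p3}`, and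
profile `A'` consisting of 1 ballot `{p1}`, 10 ballots `{p2}` and 9 ballots
`{p3}`, the rule returns `{{p1, p2}}` on both `A` and `A'`, but `{{p3}}` on the
concatenated profile. -/
theorem greedy_fails_weak_reinforcement :
    let c : Fin 3 → ℕ := ![2, 2, 3]
    let A : List (Finset (Fin 3)) :=
      List.replicate 10 {0} ++ List.replicate 1 {1} ++ List.replicate 9 {2}
    let A' : List (Finset (Fin 3)) :=
      List.replicate 1 {0} ++ List.replicate 10 {1} ++ List.replicate 9 {2}
    Fgreed c 4 A = {({0, 1} : Finset (Fin 3))} ∧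
    Fgreed c 4 A' = {({0, 1} : Finset (Fin 3))} ∧
    Fgreed c 4 (A ++ A') = {({2} : Finset (Fin 3))} ∧
    ({({2} : Finset (Fin 3))} : Set (Finset (Fin 3))) ≠ {({0, 1} : Finset (Fin 3))} := by
  refine ⟨?_, ?_, ?_, ?_⟩
  · exact Fgreed_eq_singleton (List.finRange 3) (List.nodup_finRange 3) List.mem_finRange
      (by decide) (by decide)
  · exact Fgreed_eq_singleton (List.finRange 3) (List.nodup_finRange 3) List.mem_finRange
      (by decide) (by decide)
  · exact Fgreed_eq_singleton (List.finRange 3) (List.nodup_finRange 3) List.mem_finRange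
      (by decide) (by decide)
  · rw [Ne, Set.singleton_eq_singleton_iff]
    decide
end
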